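/- arXiv:2511.10236 — 3 statements merged into one kernel-verified Lean document; each statement's English description precedes it below -/
import Mathlib

section
/- Trajectory endpoint equality: under the asymptotic equilibration hypothesis (T^S)_* μ₀ = P₁ dν with P₁ = exp(−β H₁)/Z₁ and P₀ = exp(−β H₀)/Z₀ Gibbs densities, one has exp(−β ΔF) = E_{μ₀}[exp(−β ΔH(T^S(x)))] / (1 + χ²(P₁‖P₀)), where ΔF = −β⁻¹ ln(Z₁/Z₀) and ΔH = H₁ − H₀. -/
open MeasureTheory Real

/-- Trajectory endpoint equality:
    exp(−β ΔF) = E_{μ₀}[exp(−β ΔH(T^S x))] / (1 + χ²(P₁‖P₀)). -/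
theorem trajectory_endpoint_equality
    {Γ0 ΓS : Type*} [MeasurableSpace Γ0] [MeasurableSpace ΓS]
    (μ0 : Measure Γ0) [IsProbabilityMeasure μ0]
    (ν : Measure ΓS) [SigmaFinite ν]
    (TS : Γ0 → ΓS) (hTS : Measurable TS)
    (β : ℝ) (hβ : 0 < β) (H0 H1 : ΓS → ℝ)
    (hH0 : Measurable H0) (hH1 : Measurable H1)
    (Z0 Z1 : ℝ)
    (hZ0 : Z0 = ∫ y, Real.exp (-β * H0 y) ∂ν)
    (hZ1 : Z1 = ∫ y, Real.exp (-β * H1 y) ∂ν)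
    (hZ0pos : 0 < Z0) (hZ1pos : 0 < Z1)
    (P0 P1 : ΓS → ℝ)
    (hP0 : ∀ y, P0 y = Real.exp (-β * H0 y) / Z0)
    (hP1 : ∀ y, P1 y = Real.exp (-β * H1 y) / Z1)
    (hP0pos : ∀ᵐ y ∂ν, 0 < P0 y)
    (hpush : Measure.map TS μ0 = ν.withDensity (fun y => ENNReal.ofReal (P1 y)))
    (ΔF : ℝ) (hΔF : ΔF = -β⁻¹ * Real.log (Z1 / Z0))
    (hintμ : Integrable (fun x => Real.exp (-β * (H1 (TS x) - H0 (TS x)))) μ0)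
    (hchiI : Integrable (fun y => (P1 y - P0 y) ^ 2 / P0 y) ν) :
    Real.exp (-β * ΔF)
      = (∫ x, Real.exp (-β * (H1 (TS x) - H0 (TS x))) ∂μ0)
        / (1 + ∫ y, (P1 y - P0 y) ^ 2 / P0 y ∂ν) := by

  have hβne : β ≠ 0 := hβ.ne'
  -- measurability
  have hP0m : Measurable P0 := by
    have : Measurable fun y => Real.exp (-β * H0 y) / Z0 :=
      ((hH0.const_mul (-β)).exp).div_const _
    simpa [funext hP0] using this
  have hP1m : Measurable P1 := by
    have : Measurable fun y => Real.exp (-β * H1 y) / Z1 :=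
      ((hH1.const_mul (-β)).exp).div_const _
    simpa [funext hP1] using this
  -- integrability of the Gibbs weights
  have hE0int : Integrable (fun y => Real.exp (-β * H0 y)) ν := by
    by_contra h
    rw [integral_undef h] at hZ0
    exact hZ0pos.ne' hZ0
  have hE1int : Integrable (fun y => Real.exp (-β * H1 y)) ν := by
    by_contra h
    rw [integral_undef h] at hZ1
    exact hZ1pos.ne' hZ1
  have intP0 : Integrable P0 ν := by
    simpa [funext hP0] using hE0int.div_const Z0
  have intP1 : Integrable P1 ν := by
    simpa [funext hP1] using hE1int.div_const Z1
  have hiP0 : ∫ y, P0 y ∂ν = 1 := by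
    simp only [hP0]
    rw [integral_div, ← hZ0, div_self hZ0pos.ne']
  have hiP1 : ∫ y, P1 y ∂ν = 1 := by
    simp only [hP1]
    rw [integral_div, ← hZ1, div_self hZ1pos.ne']
  -- the second moment integral
  have hI : ∫ y, P1 y ^ 2 / P0 y ∂ν
      = (∫ y, (P1 y - P0 y) ^ 2 / P0 y ∂ν) + 1 := by
    have hae : (fun y => P1 y ^ 2 / P0 y)
        =ᵐ[ν] fun y => (P1 y - P0 y) ^ 2 / P0 y + (2 * P1 y - P0 y) := by
      filter_upwards [hP0pos] with y hy
      field_simp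
      ring
    have hg : Integrable (fun y => 2 * P1 y - P0 y) ν := by
      exact (intP1.const_mul 2).sub intP0
    have hg2 : Integrable (fun y => 2 * P1 y) ν := by exact intP1.const_mul 2
    rw [integral_congr_ae hae, integral_add hchiI hg,
      integral_sub hg2 intP0, integral_const_mul, hiP1, hiP0]
    ring
  -- numerator via the pushforward
  have hN : (∫ x, Real.exp (-β * (H1 (TS x) - H0 (TS x))) ∂μ0)
      = (Z1 / Z0) * ∫ y, P1 y ^ 2 / P0 y ∂ν := by
    have hfm : AEStronglyMeasurable
        (fun y => Real.exp (-β * (H1 y - H0 y))) (Measure.map TS μ0) :=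
      (((hH1.sub hH0).const_mul (-β)).exp).aestronglyMeasurable
    rw [← integral_map hTS.aemeasurable hfm, hpush]
    have hd : (fun y => ENNReal.ofReal (P1 y))
        = fun y => ((Real.toNNReal (P1 y) : NNReal) : ENNReal) := rfl
    rw [hd, integral_withDensity_eq_integral_smul hP1m.real_toNNReal]
    have hpt : ∀ y, Real.toNNReal (P1 y) • Real.exp (-β * (H1 y - H0 y))
        = (Z1 / Z0) * (P1 y ^ 2 / P0 y) := by
      intro y
      have h1 : (0:ℝ) ≤ P1 y := by
        rw [hP1]; positivity
      rw [NNReal.smul_def, Real.coe_toNNReal _ h1, hP0, hP1,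
        show -β * (H1 y - H0 y) = (-β * H1 y) - (-β * H0 y) by ring, Real.exp_sub]
      have e0 := Real.exp_pos (-β * H0 y)
      have e1 := Real.exp_pos (-β * H1 y)
      field_simp
      have e0' : rexp (-(β * H0 y)) ≠ 0 := (Real.exp_pos _).ne'
      have z1 : Z1 ≠ 0 := hZ1pos.ne'
      rw [smul_eq_mul, div_mul_div_comm, ← mul_div_assoc, div_eq_iff (mul_ne_zero z1 e0')]
      ring
    rw [integral_congr_ae (Filter.Eventually.of_forall hpt), integral_const_mul]
  have hχnn : 0 ≤ ∫ y, (P1 y - P0 y) ^ 2 / P0 y ∂ν := by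
    apply integral_nonneg_of_ae
    filter_upwards [hP0pos] with y hy
    positivity
  have hden : (0:ℝ) < 1 + ∫ y, (P1 y - P0 y) ^ 2 / P0 y ∂ν := by linarith
  rw [hΔF, show -β * (-β⁻¹ * Real.log (Z1 / Z0)) = Real.log (Z1 / Z0) by
    field_simp, Real.exp_log (div_pos hZ1pos hZ0pos), hN, hI]
  rw [show (∫ y, (P1 y - P0 y) ^ 2 / P0 y ∂ν) + 1
      = 1 + ∫ y, (P1 y - P0 y) ^ 2 / P0 y ∂ν by ring,
    mul_div_assoc, div_self hden.ne', mul_one]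
end

section
/- Trajectory moment equality: under the hypotheses above, exp(+β ΔF) = E_{μ₀}[exp(+β ΔH(T^S(x)))], i.e., the free energy difference is exactly recovered from the positive exponential moment of the Hamiltonian shift evaluated along trajectories. -/
open MeasureTheory Real
open scoped NNReal ENNReal

/-- Trajectory moment equality:
    exp(+β ΔF) = E_{μ₀}[exp(+β ΔH(T^S x))]. -/
theorem trajectory_moment_equality
    {Γ0 ΓS : Type*} [MeasurableSpace Γ0] [MeasurableSpace ΓS]
    (μ0 : Measure Γ0) [IsProbabilityMeasure μ0]
    (ν : Measure ΓS) [SigmaFinite ν]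
    (TS : Γ0 → ΓS) (hTS : Measurable TS)
    (β : ℝ) (hβ : 0 < β) (H0 H1 : ΓS → ℝ)
    (hH0 : Measurable H0) (hH1 : Measurable H1)
    (Z0 Z1 : ℝ)
    (hZ0 : Z0 = ∫ y, Real.exp (-β * H0 y) ∂ν)
    (hZ1 : Z1 = ∫ y, Real.exp (-β * H1 y) ∂ν)
    (hZ0pos : 0 < Z0) (hZ1pos : 0 < Z1)
    (P0 P1 : ΓS → ℝ)
    (hP0 : ∀ y, P0 y = Real.exp (-β * H0 y) / Z0)
    (hP1 : ∀ y, P1 y = Real.exp (-β * H1 y) / Z1)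
    (hpush : Measure.map TS μ0 = ν.withDensity (fun y => ENNReal.ofReal (P1 y)))
    (ΔF : ℝ) (hΔF : ΔF = -β⁻¹ * Real.log (Z1 / Z0))
    (hintμ : Integrable (fun x => Real.exp (β * (H1 (TS x) - H0 (TS x)))) μ0) :
    Real.exp (β * ΔF)
      = ∫ x, Real.exp (β * (H1 (TS x) - H0 (TS x))) ∂μ0 := by
  have hP1meas : Measurable P1 := by
    have : P1 = fun y => Real.exp (-β * H1 y) / Z1 := funext hP1
    rw [this]
    exact ((hH1.const_mul (-β)).exp.div_const _)
  have hg : Measurable fun y => Real.exp (β * (H1 y - H0 y)) :=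
    ((hH1.sub hH0).const_mul β).exp
  have h1 : ∫ x, Real.exp (β * (H1 (TS x) - H0 (TS x))) ∂μ0
      = ∫ y, Real.exp (β * (H1 y - H0 y)) ∂(Measure.map TS μ0) :=
    (integral_map hTS.aemeasurable hg.aestronglyMeasurable).symm
  rw [h1, hpush]
  have hdens : (fun y => ENNReal.ofReal (P1 y))
      = fun y => ((Real.toNNReal (P1 y) : ℝ≥0) : ℝ≥0∞) := rfl
  rw [hdens, integral_withDensity_eq_integral_smul hP1meas.real_toNNReal]
  have hpt : ∀ y, (Real.toNNReal (P1 y) : ℝ≥0) • Real.exp (β * (H1 y - H0 y))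
      = Real.exp (-β * H0 y) / Z1 := by
    intro y
    have hnn : 0 ≤ P1 y := by
      rw [hP1 y]; positivity
    rw [NNReal.smul_def, Real.coe_toNNReal _ hnn, smul_eq_mul, hP1 y]
    rw [div_mul_eq_mul_div, ← Real.exp_add]
    ring_nf
  simp_rw [hpt]
  rw [integral_div, ← hZ0]
  have hβΔF : β * ΔF = Real.log (Z0 / Z1) := by
    rw [hΔF, Real.log_div hZ0pos.ne' hZ1pos.ne', Real.log_div hZ1pos.ne' hZ0pos.ne']
    field_simp
    ring
  rw [hβΔF, Real.exp_log (by positivity)]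
end

section
/- Jarzynski equality as a change-of-variables identity: let T : Γ → Γ be a measurable bijection preserving the reference measure (unit Jacobian), and suppose the pathwise work satisfies W(x₀) = H₁(T(x₀)) − H₀(x₀) for all x₀. Then ∫ exp(−β W(x₀)) P₀(x₀) dx₀ = Z₁/Z₀, where P₀ = exp(−β H₀)/Z₀ and Z_i = ∫ exp(−β H_i). -/
open MeasureTheory Real

/-- Jarzynski equality as a change-of-variables identity:
    if T preserves μ and W = H₁ ∘ T − H₀, then ⟨exp(−βW)⟩_{P₀} = Z₁/Z₀. -/
theorem jarzynski_change_of_variables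
    {Γ : Type*} [MeasurableSpace Γ] (μ : Measure Γ) [SigmaFinite μ]
    (β : ℝ) (hβ : 0 < β)
    (H0 H1 : Γ → ℝ) (hH0 : Measurable H0) (hH1 : Measurable H1)
    (Z0 Z1 : ℝ)
    (hZ0 : Z0 = ∫ x, Real.exp (-β * H0 x) ∂μ)
    (hZ1 : Z1 = ∫ x, Real.exp (-β * H1 x) ∂μ)
    (hZ0pos : 0 < Z0) (hZ1pos : 0 < Z1)
    (hZ0int : Integrable (fun x => Real.exp (-β * H0 x)) μ)
    (hZ1int : Integrable (fun x => Real.exp (-β * H1 x)) μ)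
    (T : Γ → Γ) (hT : Measurable T) (hTpres : Measure.map T μ = μ)
    (W : Γ → ℝ) (hW : ∀ x0, W x0 = H1 (T x0) - H0 x0)
    (P0 : Γ → ℝ) (hP0 : ∀ x, P0 x = Real.exp (-β * H0 x) / Z0) :
    ∫ x0, Real.exp (-β * W x0) * P0 x0 ∂μ = Z1 / Z0 := by
  have h1 : ∀ x0, Real.exp (-β * W x0) * P0 x0 = Real.exp (-β * H1 (T x0)) / Z0 := by
    intro x0
    rw [hW, hP0, mul_div_assoc', ← Real.exp_add]
    ring_nf
  simp only [h1]
  rw [integral_div]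
  have h2 : ∫ x0, Real.exp (-β * H1 (T x0)) ∂μ = ∫ x, Real.exp (-β * H1 x) ∂μ := by
    rw [← integral_map hT.aemeasurable
      ((hH1.const_mul (-β)).exp.aestronglyMeasurable), hTpres]
  rw [h2, ← hZ1]
end
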